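/- For γ ∈ {12★, 1★3} and any permutation π, p_γ(π) is the primitive permutation of π under 123 ↔ γ: p_γ(π) ≡ π, and every permutation σ with σ ≡ π satisfies |σ| ≥ |p_γ(π)|, with equality only if σ = p_γ(π). -/

import Mathlib

/-!
Pattern-replacement equivalences between permutations of different lengths
(arXiv:1309.4802). A ★-pattern is encoded as a `List (Option ℕ)`, where `none`
is the placeholder ★ and `some k` an integer entry.
-/

/-- A ★-pattern / star-string entry: `none` is ★, `some k` an integer `k`. -/
abbrev SPat := List (Option ℕ)

/-- The integer entries of a star-string, in order. -/
def ints (ρ : SPat) : List ℕ := ρ.filterMap id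

/-- Two lists of naturals are order-isomorphic. -/
def OrdIso (u v : List ℕ) : Prop :=
  u.length = v.length ∧
  ∀ i j, i < u.length → j < u.length → (u.getD i 0 < u.getD j 0 ↔ v.getD i 0 < v.getD j 0)

/-- A valid string of distinct positive integers and ★'s. -/
def StarStr (ρ : SPat) : Prop := (ints ρ).Nodup ∧ ∀ k ∈ ints ρ, 0 < k

/-- `r` (entry by entry) forms a copy of the ★-pattern `δ`: ★'s in the same
positions, and the integer entries order-isomorphic. -/
def IsCopy (r δ : SPat) : Prop :=
  r.length = δ.length ∧
  (∀ i, (r.getD i none = none ↔ δ.getD i none = none)) ∧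
  OrdIso (ints r) (ints δ)

/-- `Repl a b ρ₁ ρ₂` : `ρ₂` is obtained from `ρ₁` by replacing an occurrence of `a`
as a (not necessarily contiguous) substring of `ρ₁` by `b`, entry by entry at the
same positions. -/
inductive Repl : SPat → SPat → SPat → SPat → Prop
  | nil : Repl [] [] [] []
  | keep {a b ρ₁ ρ₂} (x : Option ℕ) : Repl a b ρ₁ ρ₂ → Repl a b (x :: ρ₁) (x :: ρ₂)
  | repl {a b ρ₁ ρ₂} (x y : Option ℕ) :
      Repl a b ρ₁ ρ₂ → Repl (x :: a) (y :: b) (x :: ρ₁) (y :: ρ₂)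

/-- `π` is a permutation of `1, …, n` (as a list). -/
def IsPermList (π : List ℕ) : Prop := π.Perm (List.range' 1 π.length)

/-- `σ` is a result of the replacement `α → β` applied to the permutation `π`:
(1) `ρ₁` is `π` renumbered (order-isomorphically) with ★'s inserted anywhere;
(2) a substring `a` of `ρ₁` forming a copy of `α` is replaced (in place) by a
string `b` that is a copy of `β`, whose integers meet `ρ₁` only inside `a`, and
which agrees with `a` on the integer entries common to `α` and `β`;
(3) dropping ★'s and renumbering gives the permutation `σ`. -/
def IsResult (α β : SPat) (π σ : List ℕ) : Prop :=
  ∃ ρ₁ ρ₂ a b : SPat,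
    StarStr ρ₁ ∧ OrdIso π (ints ρ₁) ∧
    IsCopy a α ∧
    StarStr b ∧ IsCopy b β ∧
    (∀ k ∈ ints b, k ∈ ints ρ₁ → k ∈ ints a) ∧
    (∀ i j x, α.getD i none = some x → β.getD j none = some x →
      a.getD i none = b.getD j none) ∧
    Repl a b ρ₁ ρ₂ ∧
    IsPermList σ ∧ OrdIso (ints ρ₂) σ

/-- Equivalence under the bidirectional replacement `α ↔ β`: a finite sequence
of `α → β` and `β → α` replacements. -/
def PermEquiv (α β : SPat) (π σ : List ℕ) : Prop :=
  Relation.ReflTransGen (fun τ υ => IsResult α β τ υ ∨ IsResult β α τ υ) π σ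

/-- `π` is isolated under `α ↔ β`: no other permutation is equivalent to it. -/
def Isolated (α β : SPat) (π : List ℕ) : Prop :=
  ∀ σ : List ℕ, IsPermList σ → PermEquiv α β π σ → σ = π

/-- The identity permutation `1 2 ⋯ n`. -/
def idPerm (n : ℕ) : List ℕ := List.range' 1 n

/-- The reverse identity permutation `n (n-1) ⋯ 1`. -/
def ridPerm (n : ℕ) : List ℕ := (List.range' 1 n).reverse

def pat123 : SPat := [some 1, some 2, some 3]
def pat132 : SPat := [some 1, some 3, some 2]
def patS32 : SPat := [none, some 3, some 2]
def pat3S2 : SPat := [some 3, none, some 2]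
def pat32S : SPat := [some 3, some 2, none]
def patS31 : SPat := [none, some 3, some 1]
def pat3S1 : SPat := [some 3, none, some 1]
def pat31S : SPat := [some 3, some 1, none]
def patS21 : SPat := [none, some 2, some 1]
def pat2S1 : SPat := [some 2, none, some 1]
def pat21S : SPat := [some 2, some 1, none]
def pat12S : SPat := [some 1, some 2, none]
def pat1S3 : SPat := [some 1, none, some 3]
def patS23 : SPat := [none, some 2, some 3]
def patS12 : SPat := [none, some 1, some 2]
def pat23S : SPat := [some 2, some 3, none]
def pat13S : SPat := [some 1, some 3, none]
def pat1S2 : SPat := [some 1, none, some 2]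

/-- `l` contains a (not necessarily contiguous) copy of the pattern `123`. -/
def contains123 (l : List ℕ) : Prop :=
  ∃ i j k, i < j ∧ j < k ∧ k < l.length ∧
    l.getD i 0 < l.getD j 0 ∧ l.getD j 0 < l.getD k 0

/-- All copies of `123` in `l` (as triples of 0-indexed positions), listed in
lexicographic order: first by position of the smallest element, then of the
middle element, then of the largest element. -/
def triples123 (l : List ℕ) : List (ℕ × ℕ × ℕ) :=
  (List.range l.length).flatMap fun i =>
    (List.range l.length).flatMap fun j =>
      (List.range l.length).filterMap fun k =>
        if i < j ∧ j < k ∧ l.getD i 0 < l.getD j 0 ∧ l.getD j 0 < l.getD k 0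
        then some (i, j, k) else none

/-- The leftmost copy of `123` in `l`, if any. -/
def leftmost123 (l : List ℕ) : Option (ℕ × ℕ × ℕ) := (triples123 l).head?

/-- Repeatedly (with fuel) erase, from the leftmost copy of `123`, the entry at
the position selected by `d`, until no copy of `123` remains. -/
def pIter (d : ℕ × ℕ × ℕ → ℕ) : ℕ → List ℕ → List ℕ
  | 0, l => l
  | n + 1, l =>
    match leftmost123 l with
    | none => l
    | some t => pIter d n (l.eraseIdx (d t))

/-- Renumber a list of distinct naturals, preserving relative order, into a
permutation of `1, …, n`. -/
def renumber (l : List ℕ) : List ℕ := l.map fun x => (l.filter fun y => y ≤ x).length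

def pGamma (d : ℕ × ℕ × ℕ → ℕ) (l : List ℕ) : List ℕ := renumber (pIter d l.length l)

/-- `p_γ` for `γ = 12★`: repeatedly delete the largest element of the leftmost
copy of `123`, then renumber. -/
def p12star (l : List ℕ) : List ℕ := pGamma (fun t => t.2.2) l

/-- `p_γ` for `γ = 1★3`: repeatedly delete the middle element of the leftmost
copy of `123`, then renumber. -/
def p1star3 (l : List ℕ) : List ℕ := pGamma (fun t => t.2.1) l

/-!
Call an entry of `l` deletable when the selector `d` of `pGamma d` picks it from some copy of
`123`. Deleting a deletable entry does not change which of the other entries are deletable: a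
copy of `123` through the deleted entry can be rerouted through the copy that made it
deletable. Hence the renumbered subsequence of non-deletable entries, `renumber (kept d l)`, is
invariant under deleting deletable entries. A replacement `123 → γ` is exactly such a deletion
and `γ → 123` is its inverse, so this invariant is constant on the equivalence class of `π`.
Every `σ` in the class contains `kept d σ` as a subsequence, so it is at least as long as the
invariant, with equality only if nothing in `σ` is deletable, i.e. `σ` is the invariant itself.
The greedy procedure deletes deletable entries until none is left, so it ends there.
-/

theorem getD_mem {l : List ℕ} {i : ℕ} (hi : i < l.length) : l.getD i 0 ∈ l := by
  rw [List.getD_eq_getElem _ _ hi]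
  exact List.getElem_mem hi

theorem map_getD_range (l : List ℕ) : (List.range l.length).map (l.getD · 0) = l :=
  List.ext_getElem (by simp) fun i h _ => by
    simp [List.getElem?_eq_getElem (by simpa using h : i < l.length)]

theorem length_filter_eq_length_filter_range (l : List ℕ) (p : ℕ → Bool) :
    (l.filter p).length = ((List.range l.length).filter (p <| l.getD · 0)).length := by
  conv_lhs => rw [← map_getD_range l]
  rw [List.filter_map, List.length_map]
  rfl

theorem length_filter_le_mono {l : List ℕ} {x y : ℕ} (h : x ≤ y) :
    (l.filter (· ≤ x)).length ≤ (l.filter (· ≤ y)).length :=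
  (List.monotone_filter_right l fun a ha => by
    simp only [decide_eq_true_eq] at ha ⊢; omega).length_le

theorem length_filter_le_strictMono {l : List ℕ} {x y : ℕ} (hy : y ∈ l) (h : x < y) :
    (l.filter (· ≤ x)).length < (l.filter (· ≤ y)).length := by
  have hsub := List.monotone_filter_right l (p := (· ≤ x)) (q := (· ≤ y))
    fun a ha => by simp only [decide_eq_true_eq] at ha ⊢; omega
  refine hsub.length_le.lt_of_ne fun heq => ?_
  have : y ∈ l.filter (· ≤ x) := (hsub.length_eq.1 heq) ▸ List.mem_filter.2 ⟨hy, by simp⟩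
  simp only [List.mem_filter, decide_eq_true_eq] at this
  omega

/-! ### Order isomorphism and renumbering -/

section OrdIso

variable {u v : List ℕ}

theorem OrdIso.refl (u : List ℕ) : OrdIso u u := ⟨rfl, fun _ _ _ _ => Iff.rfl⟩

theorem OrdIso.symm (h : OrdIso u v) : OrdIso v u :=
  ⟨h.1.symm, fun i j hi hj => (h.2 i j (h.1 ▸ hi) (h.1 ▸ hj)).symm⟩

theorem OrdIso.le_iff (h : OrdIso u v) {i j : ℕ} (hi : i < u.length) (hj : j < u.length) :
    u.getD i 0 ≤ u.getD j 0 ↔ v.getD i 0 ≤ v.getD j 0 := by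
  simpa only [not_lt] using not_congr (h.2 j i hj hi)

theorem OrdIso.nodup (h : OrdIso u v) (hu : u.Nodup) : v.Nodup := by
  rw [List.Nodup, List.pairwise_iff_getElem] at hu ⊢
  intro i j hi hj hij
  have hne := hu i j (h.1 ▸ hi) (h.1 ▸ hj) hij
  have hlt := h.2 i j (h.1 ▸ hi) (h.1 ▸ hj)
  have hgt := h.2 j i (h.1 ▸ hj) (h.1 ▸ hi)
  simp only [List.getD_eq_getElem _ _ hi, List.getD_eq_getElem _ _ hj,
    List.getD_eq_getElem _ _ (h.1 ▸ hi), List.getD_eq_getElem _ _ (h.1 ▸ hj)] at hlt hgt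
  omega

def skipIdx (k i : ℕ) : ℕ := if i < k then i else i + 1

theorem getD_eraseIdx (l : List ℕ) (k i : ℕ) :
    (l.eraseIdx k).getD i 0 = l.getD (skipIdx k i) 0 := by
  simp only [List.getD_eq_getElem?_getD, List.getElem?_eraseIdx, skipIdx]
  split <;> rfl

theorem skipIdx_lt_length {l : List ℕ} {k i : ℕ} (hi : i < (l.eraseIdx k).length) :
    skipIdx k i < l.length := by
  rw [List.length_eraseIdx] at hi
  unfold skipIdx
  split <;> split at hi <;> omega

theorem OrdIso.eraseIdx (h : OrdIso u v) (k : ℕ) : OrdIso (u.eraseIdx k) (v.eraseIdx k) := by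
  refine ⟨by simp only [List.length_eraseIdx, h.1], fun i j hi hj => ?_⟩
  simp only [getD_eraseIdx]
  exact h.2 _ _ (skipIdx_lt_length hi) (skipIdx_lt_length hj)

theorem OrdIso.map_getD (h : OrdIso u v) {is : List ℕ} (his : ∀ i ∈ is, i < u.length) :
    OrdIso (is.map (u.getD · 0)) (is.map (v.getD · 0)) := by
  refine ⟨by simp, fun i j hi hj => ?_⟩
  rw [List.length_map] at hi hj
  rw [List.getD_eq_getElem _ _ (by simpa using hi), List.getD_eq_getElem _ _ (by simpa using hj),
    List.getD_eq_getElem _ _ (by simpa using hi), List.getD_eq_getElem _ _ (by simpa using hj)]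
  simp only [List.getElem_map]
  exact h.2 _ _ (his _ (List.getElem_mem hi)) (his _ (List.getElem_mem hj))

theorem getD_renumber (l : List ℕ) {i : ℕ} (hi : i < l.length) :
    (renumber l).getD i 0 = (l.filter (· ≤ l.getD i 0)).length := by
  simp [renumber, List.getElem?_eq_getElem hi]

theorem length_renumber (l : List ℕ) : (renumber l).length = l.length := by
  simp [renumber]

theorem ordIso_renumber (l : List ℕ) : OrdIso l (renumber l) := by
  refine ⟨(length_renumber l).symm, fun i j hi hj => ?_⟩
  rw [getD_renumber l hi, getD_renumber l hj]
  refine ⟨length_filter_le_strictMono (getD_mem hj), fun h => ?_⟩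
  by_contra hle
  exact (length_filter_le_mono (not_lt.1 hle)).not_gt h

theorem OrdIso.renumber_eq (h : OrdIso u v) : renumber u = renumber v := by
  refine List.ext_getElem (by simp [length_renumber, h.1]) fun i hu hv => ?_
  have hi : i < u.length := by simpa [length_renumber] using hu
  rw [← List.getD_eq_getElem _ 0, ← List.getD_eq_getElem _ 0, getD_renumber _ hi,
    getD_renumber _ (h.1 ▸ hi), length_filter_eq_length_filter_range u,
    length_filter_eq_length_filter_range v, ← h.1]
  congr 1
  refine List.filter_congr fun j hj => ?_
  simp only [h.le_iff (List.mem_range.1 hj) hi]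

theorem IsPermList.nodup {π : List ℕ} (h : IsPermList π) : π.Nodup :=
  h.nodup_iff.2 List.nodup_range'

theorem IsPermList.pos {π : List ℕ} (h : IsPermList π) {x : ℕ} (hx : x ∈ π) : 0 < x := by
  have := h.subset hx
  rw [List.mem_range'_1] at this
  omega

theorem isPermList_renumber {l : List ℕ} (hl : l.Nodup) : IsPermList (renumber l) := by
  have hsub : ∀ x ∈ renumber l, x ∈ List.range' 1 (renumber l).length := by
    simp only [renumber, List.mem_map, List.length_map, List.mem_range'_1]
    rintro _ ⟨y, hy, rfl⟩
    have := List.length_filter_le (· ≤ y) l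
    have := List.length_pos_of_mem (List.mem_filter.2 ⟨hy, by simp⟩ : y ∈ l.filter (· ≤ y))
    omega
  exact (List.subperm_of_subset ((ordIso_renumber l).nodup hl) hsub).perm_of_length_le (by simp)

theorem IsPermList.renumber_eq {π : List ℕ} (h : IsPermList π) : renumber π = π := by
  refine (List.map_congr_left fun x hx => ?_).trans (List.map_id π)
  have hx' := List.mem_range'_1.1 (h.subset hx)
  have hsplit := List.range'_append (s := 1) (m := x) (n := π.length - x) (step := 1)
  rw [show x + (π.length - x) = π.length by omega, one_mul] at hsplit
  rw [(h.filter _).length_eq, ← hsplit, List.filter_append,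
    List.filter_eq_self.2 fun a ha => by
      simp only [List.mem_range'_1, decide_eq_true_eq] at ha ⊢; omega,
    List.filter_eq_nil_iff.2 fun a ha => by
      simp only [List.mem_range'_1, decide_eq_true_eq] at ha ⊢; omega]
  simp

theorem getD_lt_getD_iff {l : List ℕ} (hl : l.Pairwise (· < ·)) {i j : ℕ} (hi : i < l.length)
    (hj : j < l.length) : l.getD i 0 < l.getD j 0 ↔ i < j := by
  rw [List.pairwise_iff_getElem] at hl
  rw [List.getD_eq_getElem _ _ hi, List.getD_eq_getElem _ _ hj]
  refine ⟨fun h => ?_, hl i j hi hj⟩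
  by_contra hji
  rcases (not_lt.1 hji).lt_or_eq with hji | rfl
  · exact (hl j i hj hi hji).asymm h
  · exact lt_irrefl _ h

theorem ordIso_iff_of_pairwise_lt (hv : v.Pairwise (· < ·)) :
    OrdIso u v ↔ u.length = v.length ∧ u.Pairwise (· < ·) := by
  refine ⟨fun h => ⟨h.1, List.pairwise_iff_getElem.2 fun i j hi hj hij => ?_⟩,
    fun ⟨hlen, hu⟩ => ⟨hlen, fun i j hi hj => (getD_lt_getD_iff hu hi hj).trans
      (getD_lt_getD_iff hv (hlen ▸ hi) (hlen ▸ hj)).symm⟩⟩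
  have := (h.2 i j hi hj).2 ((getD_lt_getD_iff hv (h.1 ▸ hi) (h.1 ▸ hj)).2 hij)
  rwa [List.getD_eq_getElem _ _ hi, List.getD_eq_getElem _ _ hj] at this

end OrdIso

/-! ### Copies of `123` and deletable entries -/

theorem mem_triples123 {l : List ℕ} {i j k : ℕ} :
    (i, j, k) ∈ triples123 l ↔
      i < j ∧ j < k ∧ k < l.length ∧ l.getD i 0 < l.getD j 0 ∧ l.getD j 0 < l.getD k 0 := by
  simp only [triples123, List.mem_flatMap, List.mem_filterMap, List.mem_range,
    Option.ite_none_right_eq_some, Option.some.injEq, Prod.mk.injEq]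
  refine ⟨fun ⟨a, _, b, _, c, hc, h, ha, hb, hc'⟩ => ?_,
    fun h => ⟨i, by omega, j, by omega, k, h.2.2.1, ⟨h.1, h.2.1, h.2.2.2⟩, rfl, rfl, rfl⟩⟩
  subst ha hb hc'
  exact ⟨h.1, h.2.1, hc, h.2.2⟩

theorem contains123_iff_exists_mem_triples123 {l : List ℕ} :
    contains123 l ↔ ∃ t, t ∈ triples123 l := by
  simp only [contains123, Prod.exists, mem_triples123]

theorem OrdIso.triples123_eq {u v : List ℕ} (h : OrdIso u v) : triples123 u = triples123 v := by
  unfold triples123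
  rw [← h.1]
  refine List.flatMap_congr fun i hi => List.flatMap_congr fun j hj =>
    List.filterMap_congr fun k hk => ?_
  simp only [List.mem_range] at hi hj hk
  simp only [h.2 i j hi hj, h.2 j k hj hk]

/-- For `γ = 12★` (`d = (·.2.2)`) the deletable entries are the `3`s of copies of `123`, for
`γ = 1★3` (`d = (·.2.1)`) their `2`s. -/
def Deletable (d : ℕ × ℕ × ℕ → ℕ) (l : List ℕ) (k : ℕ) : Prop := ∃ t ∈ triples123 l, d t = k

instance (d : ℕ × ℕ × ℕ → ℕ) (l : List ℕ) (k : ℕ) : Decidable (Deletable d l k) :=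
  inferInstanceAs (Decidable (∃ t ∈ triples123 l, d t = k))

def kept (d : ℕ × ℕ × ℕ → ℕ) (l : List ℕ) : List ℕ :=
  ((List.range l.length).filter (fun k => ¬ Deletable d l k)).map (l.getD · 0)

def DeleteStep (d : ℕ × ℕ × ℕ → ℕ) (π σ : List ℕ) : Prop :=
  ∃ k, Deletable d π k ∧ σ = renumber (π.eraseIdx k)

def EraseStep (d : ℕ × ℕ × ℕ → ℕ) (u v : List ℕ) : Prop :=
  ∃ k, Deletable d u k ∧ v = u.eraseIdx k

def DeletionStable (d : ℕ × ℕ × ℕ → ℕ) : Prop :=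
  ∀ l k, Deletable d l k → ∀ i, Deletable d (l.eraseIdx k) i ↔ Deletable d l (skipIdx k i)

section Kept

variable {d : ℕ × ℕ × ℕ → ℕ}

theorem OrdIso.deletable_iff {u v : List ℕ} (h : OrdIso u v) {k : ℕ} :
    Deletable d u k ↔ Deletable d v k := by
  rw [Deletable, Deletable, h.triples123_eq]

theorem Deletable.contains123 {l : List ℕ} {k : ℕ} (h : Deletable d l k) : contains123 l :=
  let ⟨t, ht, _⟩ := h
  contains123_iff_exists_mem_triples123.2 ⟨t, ht⟩

theorem kept_sublist (d : ℕ × ℕ × ℕ → ℕ) (l : List ℕ) : (kept d l).Sublist l := by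
  have := (List.filter_sublist (l := List.range l.length)
    (p := fun k => ¬ Deletable d l k)).map (l.getD · 0)
  rwa [map_getD_range] at this

theorem kept_eq_self {l : List ℕ} (h : ¬ contains123 l) : kept d l = l := by
  rw [kept, List.filter_eq_self.2 fun k _ => by simpa using fun hk => h hk.contains123,
    map_getD_range]

theorem OrdIso.kept {u v : List ℕ} (h : OrdIso u v) : OrdIso (kept d u) (kept d v) := by
  rw [_root_.kept, _root_.kept, ← h.1]
  simp only [h.deletable_iff]
  exact h.map_getD fun i hi => List.mem_range.1 (List.mem_of_mem_filter hi)

theorem filter_range_skipIdx {k : ℕ} {p : ℕ → Bool} (hk : p k = false) :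
    ∀ n, k ≤ n → ((List.range n).filter (p ∘ skipIdx k)).map (skipIdx k)
      = (List.range (n + 1)).filter p := by
  refine Nat.le_induction ?_ fun n hn ih => ?_
  · rw [List.range_succ, List.filter_append, List.filter_singleton, hk]
    simp only [cond_false, List.append_nil]
    rw [List.map_congr_left (g := id) fun a ha => ?_, List.map_id]
    · exact List.filter_congr fun a ha => by
        simp [skipIdx, List.mem_range.1 ha]
    · simp [skipIdx, List.mem_range.1 (List.mem_of_mem_filter ha)]
  · rw [List.range_succ, List.filter_append, List.map_append, ih, List.range_succ (n := n + 1),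
      List.filter_append]
    cases hp : p (n + 1) <;> simp [skipIdx, show ¬ n < k by omega, hp]

theorem kept_eraseIdx {l : List ℕ} {k : ℕ} (hk : k < l.length) (hdel : Deletable d l k)
    (hstable : ∀ i, Deletable d (l.eraseIdx k) i ↔ Deletable d l (skipIdx k i)) :
    kept d (l.eraseIdx k) = kept d l := by
  have hfilter := filter_range_skipIdx (p := fun i => ¬ Deletable d l i) (by simpa using hdel)
    (l.length - 1) (by omega)
  rw [show l.length - 1 + 1 = l.length by omega] at hfilter
  rw [kept, kept, ← hfilter, List.map_map, List.length_eraseIdx_of_lt hk]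
  simp only [Function.comp_def, getD_eraseIdx, hstable]

end Kept

section SkipIdx

variable {l : List ℕ} {k : ℕ}

theorem skipIdx_strictMono (k : ℕ) : StrictMono (skipIdx k) := fun a b h => by
  unfold skipIdx
  split <;> split <;> omega

theorem skipIdx_ne (k i : ℕ) : skipIdx k i ≠ k := by
  unfold skipIdx
  split <;> omega

theorem exists_skipIdx_eq {x : ℕ} (hx : x ≠ k) : ∃ y, skipIdx k y = x :=
  ⟨if x < k then x else x - 1, by unfold skipIdx; split_ifs <;> omega⟩

theorem skipIdx_lt_length_iff (hk : k < l.length) {i : ℕ} :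
    skipIdx k i < l.length ↔ i < (l.eraseIdx k).length := by
  rw [List.length_eraseIdx_of_lt hk]
  unfold skipIdx
  split <;> omega

theorem mem_triples123_eraseIdx_iff (hk : k < l.length) {a b c : ℕ} :
    (a, b, c) ∈ triples123 (l.eraseIdx k) ↔
      (skipIdx k a, skipIdx k b, skipIdx k c) ∈ triples123 l := by
  simp only [mem_triples123, getD_eraseIdx, (skipIdx_strictMono k).lt_iff_lt,
    skipIdx_lt_length_iff hk]

theorem exists_mem_triples123_eraseIdx (hk : k < l.length) {a b c : ℕ}
    (h : (a, b, c) ∈ triples123 l) (ha : a ≠ k) (hb : b ≠ k) (hc : c ≠ k) :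
    ∃ t ∈ triples123 (l.eraseIdx k),
      skipIdx k t.1 = a ∧ skipIdx k t.2.1 = b ∧ skipIdx k t.2.2 = c := by
  obtain ⟨a, rfl⟩ := exists_skipIdx_eq ha
  obtain ⟨b, rfl⟩ := exists_skipIdx_eq hb
  obtain ⟨c, rfl⟩ := exists_skipIdx_eq hc
  exact ⟨(a, b, c), (mem_triples123_eraseIdx_iff hk).2 h, rfl, rfl, rfl⟩

theorem Deletable.lt_length {d : ℕ × ℕ × ℕ → ℕ} (hd : ∀ a b c, b < c → d (a, b, c) ≤ c)
    (h : Deletable d l k) : k < l.length := by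
  obtain ⟨⟨a, b, c⟩, ht, rfl⟩ := h
  have := mem_triples123.1 ht
  exact (hd a b c this.2.1).trans_lt this.2.2.1

end SkipIdx

/-- If `k` is the top of a copy of `123`, a copy using `k` as its `1` or `2` can borrow the
smaller entries of the copy topped by `k` instead. -/
theorem deletionStable_top : DeletionStable (·.2.2) := by
  intro l k hk i
  have hkl := hk.lt_length fun _ _ _ _ => le_rfl
  constructor
  · rintro ⟨t, ht, rfl⟩
    exact ⟨_, (mem_triples123_eraseIdx_iff hkl).1 ht, rfl⟩
  rintro ⟨⟨a, b, c⟩, ht, hc : c = skipIdx k i⟩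
  obtain ⟨⟨a₀, b₀, k⟩, hk, rfl⟩ := hk
  have hck : c ≠ k := hc ▸ skipIdx_ne k i
  have avoid : ∃ a' b', (a', b', c) ∈ triples123 l ∧ a' ≠ k ∧ b' ≠ k := by
    simp only [mem_triples123] at ht hk ⊢
    by_cases hb : b = k
    · subst hb
      exact ⟨a₀, b₀, by omega, by omega, by omega⟩
    by_cases ha : a = k
    · subst ha
      exact ⟨b₀, b, by omega, by omega, hb⟩
    exact ⟨a, b, ht, ha, hb⟩
  obtain ⟨a', b', ht', ha', hb'⟩ := avoid
  obtain ⟨t, ht'', -, -, hc'⟩ := exists_mem_triples123_eraseIdx hkl ht' ha' hb' hck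
  exact ⟨t, ht'', (skipIdx_strictMono k).injective (hc'.trans hc)⟩

/-- If `k` is the middle of a copy of `123`, a copy using `k` as its `1` or `3` can borrow the
corresponding outer entry of the copy through `k` instead. -/
theorem deletionStable_mid : DeletionStable (·.2.1) := by
  intro l k hk i
  have hkl := hk.lt_length fun _ _ _ h => h.le
  constructor
  · rintro ⟨t, ht, rfl⟩
    exact ⟨_, (mem_triples123_eraseIdx_iff hkl).1 ht, rfl⟩
  rintro ⟨⟨a, b, c⟩, ht, hb : b = skipIdx k i⟩
  obtain ⟨⟨a₀, k, c₀⟩, hk, rfl⟩ := hk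
  have hbk : b ≠ k := hb ▸ skipIdx_ne k i
  have avoid : ∃ a' c', (a', b, c') ∈ triples123 l ∧ a' ≠ k ∧ c' ≠ k := by
    simp only [mem_triples123] at ht hk ⊢
    by_cases ha : a = k
    · subst ha
      exact ⟨a₀, c, by omega, by omega, by omega⟩
    by_cases hc : c = k
    · subst hc
      exact ⟨a, c₀, by omega, ha, by omega⟩
    exact ⟨a, c, ht, ha, hc⟩
  obtain ⟨a', c', ht', ha', hc'⟩ := avoid
  obtain ⟨t, ht'', -, hb', -⟩ := exists_mem_triples123_eraseIdx hkl ht' ha' hbk hc'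
  exact ⟨t, ht'', (skipIdx_strictMono k).injective (hb'.trans hb)⟩

/-! ### Replacements between `123` and `γ` -/

section Split3

variable {A B C D : List ℕ} {u v w : ℕ}

theorem exists_drop_eq_append_cons {l : List ℕ} {i j : ℕ} (hij : i ≤ j) (hj : j < l.length) :
    ∃ B : List ℕ, l.drop i = B ++ l.getD j 0 :: l.drop (j + 1) ∧ B.length = j - i := by
  refine ⟨(l.drop i).take (j - i), ?_, by simp only [List.length_take, List.length_drop]; omega⟩
  conv_lhs => rw [← List.take_append_drop (j - i) (l.drop i)]
  rw [List.drop_drop, List.getD_eq_getElem _ _ hj, show i + (j - i) = j by omega,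
    List.drop_eq_getElem_cons hj]

theorem exists_split3_of_mem_triples123 {l : List ℕ} {i j m : ℕ}
    (h : (i, j, m) ∈ triples123 l) :
    ∃ (A B C D : List ℕ) (u v w : ℕ), l = A ++ u :: (B ++ v :: (C ++ w :: D)) ∧ u < v ∧ v < w ∧
      A.length = i ∧ A.length + B.length + 1 = j ∧ A.length + B.length + C.length + 2 = m := by
  obtain ⟨hij, hjm, hm, huv, hvw⟩ := mem_triples123.1 h
  obtain ⟨A, hA, hAl⟩ := exists_drop_eq_append_cons (l := l) (Nat.zero_le i) (by omega)
  obtain ⟨B, hB, hBl⟩ := exists_drop_eq_append_cons (l := l) (i := i + 1) hij (by omega)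
  obtain ⟨C, hC, hCl⟩ := exists_drop_eq_append_cons (l := l) (i := j + 1) hjm hm
  refine ⟨A, B, C, l.drop (m + 1), _, _, _, ?_, huv, hvw, by omega, by omega, by omega⟩
  rw [← hC, ← hB, ← hA, List.drop_zero]

theorem getD_append_cons (P R : List ℕ) (x : ℕ) {n : ℕ} (hn : n = P.length) :
    (P ++ x :: R).getD n 0 = x := by
  simp [hn]

theorem eraseIdx_append_cons (P R : List ℕ) (x : ℕ) {n : ℕ} (hn : n = P.length) :
    (P ++ x :: R).eraseIdx n = P ++ R := by
  rw [hn, List.eraseIdx_append_of_length_le le_rfl, Nat.sub_self, List.eraseIdx_cons_zero]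

theorem mem_triples123_split3 (huv : u < v) (hvw : v < w) :
    (A.length, A.length + B.length + 1, A.length + B.length + C.length + 2) ∈
      triples123 (A ++ u :: (B ++ v :: (C ++ w :: D))) := by
  have e₁ := getD_append_cons A (B ++ v :: (C ++ w :: D)) u rfl
  have e₂ : (A ++ u :: (B ++ v :: (C ++ w :: D))).getD (A.length + B.length + 1) 0 = v := by
    simpa using getD_append_cons (A ++ u :: B) (C ++ w :: D) v
      (by simp only [List.length_append, List.length_cons]; omega)
  have e₃ : (A ++ u :: (B ++ v :: (C ++ w :: D))).getD (A.length + B.length + C.length + 2) 0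
      = w := by
    simpa using getD_append_cons (A ++ u :: B ++ v :: C) D w
      (by simp only [List.length_append, List.length_cons]; omega)
  rw [mem_triples123, e₁, e₂, e₃]
  simp only [List.length_append, List.length_cons]
  omega

theorem eraseIdx_split3_right :
    (A ++ u :: (B ++ v :: (C ++ w :: D))).eraseIdx (A.length + B.length + C.length + 2) =
      A ++ u :: (B ++ v :: (C ++ D)) := by
  simpa using eraseIdx_append_cons (A ++ u :: B ++ v :: C) D w
    (by simp only [List.length_append, List.length_cons]; omega)

theorem eraseIdx_split3_mid :
    (A ++ u :: (B ++ v :: (C ++ w :: D))).eraseIdx (A.length + B.length + 1) =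
      A ++ u :: (B ++ (C ++ w :: D)) := by
  simpa using eraseIdx_append_cons (A ++ u :: B) (C ++ w :: D) v
    (by simp only [List.length_append, List.length_cons]; omega)

end Split3

@[simp] theorem ints_nil : ints [] = [] := rfl

@[simp] theorem ints_cons_some (x : ℕ) (ρ : SPat) : ints (some x :: ρ) = x :: ints ρ := rfl

@[simp] theorem ints_cons_none (ρ : SPat) : ints (none :: ρ) = ints ρ := rfl

@[simp] theorem ints_append (ρ ρ' : SPat) : ints (ρ ++ ρ') = ints ρ ++ ints ρ' :=
  List.filterMap_append

@[simp] theorem ints_map_some (l : List ℕ) : ints (l.map some) = l := by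
  simp [ints, List.filterMap_map]

theorem repl_nil_nil_self : ∀ ρ : SPat, Repl [] [] ρ ρ
  | [] => .nil
  | x :: ρ => .keep x (repl_nil_nil_self ρ)

theorem Repl.append {a b ρ₁ ρ₂ a' b' τ₁ τ₂ : SPat} (h : Repl a b ρ₁ ρ₂) (h' : Repl a' b' τ₁ τ₂) :
    Repl (a ++ a') (b ++ b') (ρ₁ ++ τ₁) (ρ₂ ++ τ₂) := by
  induction h with
  | nil => exact h'
  | keep x _ ih => exact .keep x ih
  | repl x y _ ih => exact .repl x y ih

theorem Repl.eq_of_nil : ∀ {ρ₁ ρ₂ : SPat}, Repl [] [] ρ₁ ρ₂ → ρ₁ = ρ₂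
  | _, _, .nil => rfl
  | _, _, .keep x h => by rw [h.eq_of_nil]

theorem Repl.exists_of_cons {x y : Option ℕ} {a b ρ₁ ρ₂ : SPat} (h : Repl (x :: a) (y :: b) ρ₁ ρ₂) :
    ∃ τ ρ₁' ρ₂', ρ₁ = τ ++ x :: ρ₁' ∧ ρ₂ = τ ++ y :: ρ₂' ∧ Repl a b ρ₁' ρ₂' := by
  generalize ha : x :: a = a', hb : y :: b = b' at h
  induction h with
  | nil => simp at ha
  | keep z _ ih =>
    obtain ⟨τ, ρ₁', ρ₂', rfl, rfl, h⟩ := ih ha hb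
    exact ⟨z :: τ, ρ₁', ρ₂', rfl, rfl, h⟩
  | repl _ _ h =>
    cases ha
    cases hb
    exact ⟨[], _, _, rfl, rfl, h⟩

theorem Repl.exists_split3 {x₁ x₂ x₃ y₁ y₂ y₃ : Option ℕ} {ρ₁ ρ₂ : SPat}
    (h : Repl [x₁, x₂, x₃] [y₁, y₂, y₃] ρ₁ ρ₂) :
    ∃ τ₁ τ₂ τ₃ τ₄ : SPat, ρ₁ = τ₁ ++ x₁ :: (τ₂ ++ x₂ :: (τ₃ ++ x₃ :: τ₄)) ∧
      ρ₂ = τ₁ ++ y₁ :: (τ₂ ++ y₂ :: (τ₃ ++ y₃ :: τ₄)) := by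
  obtain ⟨τ₁, _, _, rfl, rfl, h₁⟩ := h.exists_of_cons
  obtain ⟨τ₂, _, _, rfl, rfl, h₂⟩ := h₁.exists_of_cons
  obtain ⟨τ₃, τ₄, _, rfl, rfl, h₃⟩ := h₂.exists_of_cons
  exact ⟨τ₁, τ₂, τ₃, τ₄, rfl, by rw [h₃.eq_of_nil]⟩

theorem repl_split3 (x₁ x₂ x₃ y₁ y₂ y₃ : Option ℕ) (τ₁ τ₂ τ₃ τ₄ : SPat) :
    Repl [x₁, x₂, x₃] [y₁, y₂, y₃] (τ₁ ++ x₁ :: (τ₂ ++ x₂ :: (τ₃ ++ x₃ :: τ₄)))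
      (τ₁ ++ y₁ :: (τ₂ ++ y₂ :: (τ₃ ++ y₃ :: τ₄))) :=
  (repl_nil_nil_self τ₁).append <| .repl x₁ y₁ <| (repl_nil_nil_self τ₂).append <|
    .repl x₂ y₂ <| (repl_nil_nil_self τ₃).append <| .repl x₃ y₃ (repl_nil_nil_self τ₄)

theorem isCopy_pat123_iff {a : SPat} :
    IsCopy a pat123 ↔ ∃ u v w, a = [some u, some v, some w] ∧ u < v ∧ v < w := by
  constructor
  · rintro ⟨hlen, hstar, hiso⟩
    obtain ⟨x, y, z, rfl⟩ := List.length_eq_three.1 hlen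
    have h₀ := hstar 0
    have h₁ := hstar 1
    have h₂ := hstar 2
    rcases x with _ | u <;> rcases y with _ | v <;> rcases z with _ | w <;>
      simp only [pat123, List.getD_cons_zero, List.getD_cons_succ, reduceCtorEq, iff_false,
        not_true_eq_false] at h₀ h₁ h₂
    rw [ordIso_iff_of_pairwise_lt (by decide)] at hiso
    simp only [ints_cons_some, ints_nil, List.pairwise_cons] at hiso
    exact ⟨u, v, w, rfl, hiso.2.1 v (by simp), hiso.2.2.1 w (by simp)⟩
  · rintro ⟨u, v, w, rfl, huv, hvw⟩
    refine ⟨rfl, fun i => ?_, (ordIso_iff_of_pairwise_lt (by decide)).2 ⟨rfl, ?_⟩⟩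
    · rcases i with _ | _ | _ | i <;> simp [pat123]
    · simp [ints]
      omega

theorem isCopy_pat12S_iff {a : SPat} :
    IsCopy a pat12S ↔ ∃ u v, a = [some u, some v, none] ∧ u < v := by
  constructor
  · rintro ⟨hlen, hstar, hiso⟩
    obtain ⟨x, y, z, rfl⟩ := List.length_eq_three.1 hlen
    have h₀ := hstar 0
    have h₁ := hstar 1
    have h₂ := hstar 2
    rcases x with _ | u <;> rcases y with _ | v <;> rcases z with _ | w <;>
      simp only [pat12S, List.getD_cons_zero, List.getD_cons_succ, reduceCtorEq, iff_true,
        iff_false, not_true_eq_false] at h₀ h₁ h₂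
    rw [ordIso_iff_of_pairwise_lt (by decide)] at hiso
    simpa using hiso.2
  · rintro ⟨u, v, rfl, huv⟩
    refine ⟨rfl, fun i => ?_, (ordIso_iff_of_pairwise_lt (by decide)).2 ⟨rfl, by simpa [ints]⟩⟩
    rcases i with _ | _ | _ | i <;> simp [pat12S]

theorem isCopy_pat1S3_iff {a : SPat} :
    IsCopy a pat1S3 ↔ ∃ u w, a = [some u, none, some w] ∧ u < w := by
  constructor
  · rintro ⟨hlen, hstar, hiso⟩
    obtain ⟨x, y, z, rfl⟩ := List.length_eq_three.1 hlen
    have h₀ := hstar 0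
    have h₁ := hstar 1
    have h₂ := hstar 2
    rcases x with _ | u <;> rcases y with _ | v <;> rcases z with _ | w <;>
      simp only [pat1S3, List.getD_cons_zero, List.getD_cons_succ, reduceCtorEq, iff_true,
        iff_false, not_true_eq_false] at h₀ h₁ h₂
    rw [ordIso_iff_of_pairwise_lt (by decide)] at hiso
    simpa using hiso.2
  · rintro ⟨u, w, rfl, huw⟩
    refine ⟨rfl, fun i => ?_, (ordIso_iff_of_pairwise_lt (by decide)).2 ⟨rfl, by simpa [ints]⟩⟩
    rcases i with _ | _ | _ | i <;> simp [pat1S3]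

section Link

variable {π σ : List ℕ}

theorem IsResult.isPermList {α β : SPat} (h : IsResult α β π σ) : IsPermList σ := by
  obtain ⟨-, -, -, -, -, -, -, -, -, -, -, -, hσ, -⟩ := h
  exact hσ

theorem deleteStep_of_ordIso {d : ℕ × ℕ × ℕ → ℕ} {l : List ℕ} {k : ℕ} (hσ : IsPermList σ)
    (h₁ : OrdIso π l) (h₂ : OrdIso (l.eraseIdx k) σ) (hk : Deletable d l k) :
    DeleteStep d π σ :=
  ⟨k, h₁.deletable_iff.2 hk, by
    rw [← hσ.renumber_eq, ← h₂.renumber_eq, (h₁.eraseIdx k).renumber_eq]⟩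

theorem isResult_of_repl {α β a b ρ₂ : SPat} {l : List ℕ} (hπ : IsPermList π)
    (ha : IsCopy a α) (hb : StarStr b) (hbβ : IsCopy b β) (hba : ∀ x ∈ ints b, x ∈ ints a)
    (hag : ∀ i j x, α.getD i none = some x → β.getD j none = some x →
      a.getD i none = b.getD j none)
    (hr : Repl a b (π.map some) ρ₂) (hl : ints ρ₂ = l) (hnd : l.Nodup) :
    IsResult α β π (renumber l) :=
  ⟨π.map some, ρ₂, a, b, ⟨by simpa using hπ.nodup, by simpa using fun _ => hπ.pos⟩,
    by simpa using OrdIso.refl π, ha, hb, hbβ, fun x hx _ => hba x hx, hag, hr,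
    isPermList_renumber hnd, hl ▸ ordIso_renumber _⟩

theorem isResult_123_12S_iff (hπ : IsPermList π) :
    IsResult pat123 pat12S π σ ↔ DeleteStep (·.2.2) π σ := by
  constructor
  · rintro ⟨ρ₁, ρ₂, a, b, -, h₁, ha, -, hb, -, hag, hr, hσ, h₂⟩
    obtain ⟨u, v, w, rfl, huv, hvw⟩ := isCopy_pat123_iff.1 ha
    obtain ⟨u', v', rfl, -⟩ := isCopy_pat12S_iff.1 hb
    obtain rfl : u' = u := by simpa using (hag 0 0 1 rfl rfl).symm
    obtain rfl : v' = v := by simpa using (hag 1 1 2 rfl rfl).symm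
    obtain ⟨τ₁, τ₂, τ₃, τ₄, rfl, rfl⟩ := hr.exists_split3
    simp only [ints_append, ints_cons_some, ints_cons_none] at h₁ h₂
    refine deleteStep_of_ordIso hσ h₁ ?_ ⟨_, mem_triples123_split3 huv hvw, rfl⟩
    rwa [eraseIdx_split3_right]
  · rintro ⟨_, ⟨⟨i, j, m⟩, ht, rfl⟩, rfl⟩
    obtain ⟨A, B, C, D, u, v, w, rfl, huv, hvw, -, -, rfl⟩ :=
      exists_split3_of_mem_triples123 ht
    have hu : 0 < u := hπ.pos (by simp)
    have hr := repl_split3 (some u) (some v) (some w) (some u) (some v) none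
      (A.map some) (B.map some) (C.map some) (D.map some)
    refine isResult_of_repl hπ (isCopy_pat123_iff.2 ⟨u, v, w, rfl, huv, hvw⟩)
      ⟨by simpa using huv.ne, by simpa using ⟨hu, hu.trans huv⟩⟩
      (isCopy_pat12S_iff.2 ⟨u, v, rfl, huv⟩) (by simp) ?_
      (by simpa using hr) (by simp [eraseIdx_split3_right])
      (hπ.nodup.sublist (List.eraseIdx_sublist _ _))
    rintro (_ | _ | _ | i) (_ | _ | _ | j) x <;> simp [pat123, pat12S] <;> omega

theorem deleteStep_of_isResult_12S_123 (hπ : IsPermList π) (h : IsResult pat12S pat123 π σ) :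
    DeleteStep (·.2.2) σ π := by
  obtain ⟨ρ₁, ρ₂, a, b, -, h₁, ha, -, hb, -, hag, hr, -, h₂⟩ := h
  obtain ⟨u, v, rfl, -⟩ := isCopy_pat12S_iff.1 ha
  obtain ⟨u', v', w, rfl, huv, hvw⟩ := isCopy_pat123_iff.1 hb
  obtain rfl : u' = u := by simpa using (hag 0 0 1 rfl rfl).symm
  obtain rfl : v' = v := by simpa using (hag 1 1 2 rfl rfl).symm
  obtain ⟨τ₁, τ₂, τ₃, τ₄, rfl, rfl⟩ := hr.exists_split3
  simp only [ints_append, ints_cons_some, ints_cons_none] at h₁ h₂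
  refine deleteStep_of_ordIso hπ h₂.symm ?_ ⟨_, mem_triples123_split3 huv hvw, rfl⟩
  rw [eraseIdx_split3_right]
  exact h₁.symm

theorem isResult_123_1S3_iff (hπ : IsPermList π) :
    IsResult pat123 pat1S3 π σ ↔ DeleteStep (·.2.1) π σ := by
  constructor
  · rintro ⟨ρ₁, ρ₂, a, b, -, h₁, ha, -, hb, -, hag, hr, hσ, h₂⟩
    obtain ⟨u, v, w, rfl, huv, hvw⟩ := isCopy_pat123_iff.1 ha
    obtain ⟨u', w', rfl, -⟩ := isCopy_pat1S3_iff.1 hb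
    obtain rfl : u' = u := by simpa using (hag 0 0 1 rfl rfl).symm
    obtain rfl : w' = w := by simpa using (hag 2 2 3 rfl rfl).symm
    obtain ⟨τ₁, τ₂, τ₃, τ₄, rfl, rfl⟩ := hr.exists_split3
    simp only [ints_append, ints_cons_some, ints_cons_none] at h₁ h₂
    refine deleteStep_of_ordIso hσ h₁ ?_ ⟨_, mem_triples123_split3 huv hvw, rfl⟩
    rwa [eraseIdx_split3_mid]
  · rintro ⟨_, ⟨⟨i, j, m⟩, ht, rfl⟩, rfl⟩
    obtain ⟨A, B, C, D, u, v, w, rfl, huv, hvw, -, rfl, -⟩ :=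
      exists_split3_of_mem_triples123 ht
    have hu : 0 < u := hπ.pos (by simp)
    have hr := repl_split3 (some u) (some v) (some w) (some u) none (some w)
      (A.map some) (B.map some) (C.map some) (D.map some)
    refine isResult_of_repl hπ (isCopy_pat123_iff.2 ⟨u, v, w, rfl, huv, hvw⟩)
      ⟨by simpa using (huv.trans hvw).ne, by simpa using ⟨hu, hu.trans (huv.trans hvw)⟩⟩
      (isCopy_pat1S3_iff.2 ⟨u, w, rfl, huv.trans hvw⟩)
      (by simp) ?_ (by simpa using hr) (by simp [eraseIdx_split3_mid])
      (hπ.nodup.sublist (List.eraseIdx_sublist _ _))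
    rintro (_ | _ | _ | i) (_ | _ | _ | j) x <;> simp [pat123, pat1S3] <;> omega

theorem deleteStep_of_isResult_1S3_123 (hπ : IsPermList π) (h : IsResult pat1S3 pat123 π σ) :
    DeleteStep (·.2.1) σ π := by
  obtain ⟨ρ₁, ρ₂, a, b, -, h₁, ha, -, hb, -, hag, hr, -, h₂⟩ := h
  obtain ⟨u, w, rfl, -⟩ := isCopy_pat1S3_iff.1 ha
  obtain ⟨u', v, w', rfl, huv, hvw⟩ := isCopy_pat123_iff.1 hb
  obtain rfl : u' = u := by simpa using (hag 0 0 1 rfl rfl).symm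
  obtain rfl : w' = w := by simpa using (hag 2 2 3 rfl rfl).symm
  obtain ⟨τ₁, τ₂, τ₃, τ₄, rfl, rfl⟩ := hr.exists_split3
  simp only [ints_append, ints_cons_some, ints_cons_none] at h₁ h₂
  refine deleteStep_of_ordIso hπ h₂.symm ?_ ⟨_, mem_triples123_split3 huv hvw, rfl⟩
  rw [eraseIdx_split3_mid]
  exact h₁.symm

end Link

/-! ### The greedy deletion and the invariant -/

def IsPrimitive (α β : SPat) (π ρ : List ℕ) : Prop :=
  PermEquiv α β π ρ ∧ ∀ σ : List ℕ, IsPermList σ → PermEquiv α β π σ →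
    ρ.length ≤ σ.length ∧ (σ.length = ρ.length → σ = ρ)

section Greedy

variable {d : ℕ × ℕ × ℕ → ℕ}

theorem leftmost123_eq_none_iff {l : List ℕ} : leftmost123 l = none ↔ ¬ contains123 l := by
  simp [leftmost123, contains123_iff_exists_mem_triples123, List.eq_nil_iff_forall_not_mem]

theorem pIter_spec (hd : ∀ a b c, b < c → d (a, b, c) ≤ c) : ∀ n l, l.length ≤ n →
    Relation.ReflTransGen (EraseStep d) l (pIter d n l) ∧ ¬ contains123 (pIter d n l)
  | 0, l, hl => by
    refine ⟨.refl, fun h => ?_⟩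
    obtain ⟨⟨a, b, c⟩, ht⟩ := contains123_iff_exists_mem_triples123.1 h
    have := (mem_triples123.1 ht).2.2.1
    simp only [pIter] at this
    omega
  | n + 1, l, hl => by
    simp only [pIter]
    cases h : leftmost123 l with
    | none => exact ⟨.refl, leftmost123_eq_none_iff.1 h⟩
    | some t =>
      have hk : Deletable d l (d t) := ⟨t, List.mem_of_head? h, rfl⟩
      obtain ⟨hchain, havoid⟩ := pIter_spec hd n (l.eraseIdx (d t))
        (by rw [List.length_eraseIdx_of_lt (hk.lt_length hd)]; omega)
      exact ⟨.head ⟨_, hk, rfl⟩ hchain, havoid⟩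

theorem kept_eq_of_reflTransGen (hd : ∀ a b c, b < c → d (a, b, c) ≤ c)
    (hstable : DeletionStable d)
    {u v : List ℕ} (h : Relation.ReflTransGen (EraseStep d) u v) : kept d v = kept d u := by
  induction h with
  | refl => rfl
  | tail _ hstep ih =>
    obtain ⟨k, hk, rfl⟩ := hstep
    rw [kept_eraseIdx (hk.lt_length hd) hk (hstable _ _ hk), ih]

theorem renumber_kept_eq_of_deleteStep (hd : ∀ a b c, b < c → d (a, b, c) ≤ c)
    (hstable : DeletionStable d)
    {π σ : List ℕ} (h : DeleteStep d π σ) : renumber (kept d σ) = renumber (kept d π) := by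
  obtain ⟨k, hk, rfl⟩ := h
  rw [← (ordIso_renumber (π.eraseIdx k)).kept.renumber_eq,
    kept_eraseIdx (hk.lt_length hd) hk (hstable _ _ hk)]

theorem sublist_of_reflTransGen {u v : List ℕ} (h : Relation.ReflTransGen (EraseStep d) u v) :
    v.Sublist u := by
  induction h with
  | refl => exact .refl _
  | tail _ hstep ih =>
    obtain ⟨k, -, rfl⟩ := hstep
    exact (List.eraseIdx_sublist _ k).trans ih

theorem permEquiv_renumber_of_reflTransGen {γ : SPat}
    (hfwd : ∀ {π σ}, IsPermList π → DeleteStep d π σ → IsResult pat123 γ π σ)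
    {u v : List ℕ} (hu : u.Nodup) (h : Relation.ReflTransGen (EraseStep d) u v) :
    PermEquiv pat123 γ (renumber u) (renumber v) := by
  induction h with
  | refl => exact .refl
  | tail huv hstep ih =>
    obtain ⟨k, hk, rfl⟩ := hstep
    have hv := hu.sublist (sublist_of_reflTransGen huv)
    refine ih.tail (.inl (hfwd (isPermList_renumber hv) ⟨k, ?_, ?_⟩))
    · exact (ordIso_renumber _).deletable_iff.1 hk
    · exact ((ordIso_renumber _).eraseIdx k).renumber_eq

theorem renumber_kept_eq_of_permEquiv {γ : SPat} (hd : ∀ a b c, b < c → d (a, b, c) ≤ c)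
    (hstable : DeletionStable d)
    (hinv : ∀ {π σ}, IsPermList π → IsResult pat123 γ π σ → DeleteStep d π σ)
    (hrev : ∀ {π σ}, IsPermList π → IsResult γ pat123 π σ → DeleteStep d σ π)
    {π σ : List ℕ} (hπ : IsPermList π) (h : PermEquiv pat123 γ π σ) :
    IsPermList σ ∧ renumber (kept d σ) = renumber (kept d π) := by
  induction h with
  | refl => exact ⟨hπ, rfl⟩
  | tail _ hstep ih =>
    obtain ⟨hσ, heq⟩ := ih
    rcases hstep with h | h
    · exact ⟨h.isPermList, (renumber_kept_eq_of_deleteStep hd hstable (hinv hσ h)).trans heq⟩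
    · exact ⟨h.isPermList,
        (renumber_kept_eq_of_deleteStep hd hstable (hrev hσ h)).symm.trans heq⟩

theorem isPrimitive_pGamma {γ : SPat} (hd : ∀ a b c, b < c → d (a, b, c) ≤ c)
    (hstable : DeletionStable d)
    (hlink : ∀ {π σ}, IsPermList π → (IsResult pat123 γ π σ ↔ DeleteStep d π σ))
    (hrev : ∀ {π σ}, IsPermList π → IsResult γ pat123 π σ → DeleteStep d σ π)
    {π : List ℕ} (hπ : IsPermList π) : IsPrimitive pat123 γ π (pGamma d π) := by
  obtain ⟨hchain, havoid⟩ := pIter_spec hd π.length π le_rfl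
  have hp : pGamma d π = renumber (kept d π) := by
    rw [pGamma, ← kept_eq_self (d := d) havoid, kept_eq_of_reflTransGen hd hstable hchain]
  refine ⟨?_, fun σ hσ hπσ => ?_⟩
  · have := permEquiv_renumber_of_reflTransGen (fun h => (hlink h).2) hπ.nodup hchain
    rwa [hπ.renumber_eq] at this
  · obtain ⟨-, hinv⟩ := renumber_kept_eq_of_permEquiv hd hstable (fun h => (hlink h).1) hrev hπ hπσ
    rw [hp, ← hinv, length_renumber]
    refine ⟨(kept_sublist d σ).length_le, fun hlen => ?_⟩
    rw [(kept_sublist d σ).eq_of_length hlen.symm, hσ.renumber_eq]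

end Greedy

/-- for `γ ∈ {12★, 1★3}`, `p_γ(π)` is the primitive permutation of
`π` under `123 ↔ γ`: it is equivalent to `π`, and every permutation equivalent
to `π` has length at least `|p_γ(π)|`, with equality only for `p_γ(π)` itself. -/
theorem pGamma_primitive :
    (∀ π : List ℕ, IsPermList π →
      PermEquiv pat123 pat12S π (p12star π) ∧
      ∀ σ : List ℕ, IsPermList σ → PermEquiv pat123 pat12S π σ →
        (p12star π).length ≤ σ.length ∧ (σ.length = (p12star π).length → σ = p12star π)) ∧
    (∀ π : List ℕ, IsPermList π →
      PermEquiv pat123 pat1S3 π (p1star3 π) ∧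
      ∀ σ : List ℕ, IsPermList σ → PermEquiv pat123 pat1S3 π σ →
        (p1star3 π).length ≤ σ.length ∧ (σ.length = (p1star3 π).length → σ = p1star3 π)) :=
  ⟨fun _ => isPrimitive_pGamma (fun _ _ _ _ => le_rfl) deletionStable_top
      isResult_123_12S_iff deleteStep_of_isResult_12S_123,
    fun _ => isPrimitive_pGamma (fun _ _ _ h => h.le) deletionStable_mid
      isResult_123_1S3_iff deleteStep_of_isResult_1S3_123⟩
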